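/- arXiv:2501.03141 — 11 statements merged into one kernel-verified Lean document; each statement's English description precedes it below -/
import Mathlib

section
/- Let U be a finite set of nonnegative real numbers and let t ≥ 0 be a tick bound for U. Let x : U → ℝ be monotonically nondecreasing with 0 ≤ x(b) ≤ 1 for all b ∈ U, and let p, μ : U → ℝ. Suppose that (i) for all b, b' ∈ U with b < b' the sandwich inequality b·(x(b') − x(b)) ≤ p(b') − p(b) ≤ b'·(x(b') − x(b)) holds, and (ii) for all b, b' ∈ U one has μ(b') − μ(b) ≤ (p(b') − p(b)) − b·(x(b') − x(b)). Then for all b, b' ∈ U, μ(b') − μ(b) ≤ t·|x(b') − x(b)|. -/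
/-- revenue-tick lemma on a finite value domain.
`t` is a tick bound for `U`: for adjacent `a < b` in `U`, `b - a ≤ t`. -/
theorem revenue_tick_finite
    (U : Finset ℝ) (hUnn : ∀ u ∈ U, 0 ≤ u)
    (t : ℝ) (ht : 0 ≤ t)
    (htick : ∀ a ∈ U, ∀ b ∈ U, a < b → (∀ c ∈ U, ¬ (a < c ∧ c < b)) → b - a ≤ t)
    (x p μ : ℝ → ℝ)
    (hx01 : ∀ b ∈ U, 0 ≤ x b ∧ x b ≤ 1)
    (hmono : ∀ a ∈ U, ∀ b ∈ U, a ≤ b → x a ≤ x b)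
    (hsand : ∀ b ∈ U, ∀ b' ∈ U, b < b' →
      b * (x b' - x b) ≤ p b' - p b ∧ p b' - p b ≤ b' * (x b' - x b))
    (hcol : ∀ b ∈ U, ∀ b' ∈ U,
      μ b' - μ b ≤ (p b' - p b) - b * (x b' - x b)) :
    ∀ b ∈ U, ∀ b' ∈ U, μ b' - μ b ≤ t * |x b' - x b| := by
  -- adjacent-step bound
  have adj : ∀ a ∈ U, ∀ b ∈ U, a < b → (∀ c ∈ U, ¬ (a < c ∧ c < b)) →
      μ b - μ a ≤ t * (x b - x a) ∧ μ a - μ b ≤ t * (x b - x a) := by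
    intro a ha b hb hab hno
    have hx : x a ≤ x b := hmono a ha b hb hab.le
    have hba : b - a ≤ t := htick a ha b hb hab hno
    have h1 := hcol a ha b hb
    have h2 := hcol b hb a ha
    have hs := hsand a ha b hb hab
    have hxn : 0 ≤ x b - x a := by linarith
    constructor
    · nlinarith [mul_nonneg (sub_nonneg.mpr hba) hxn]
    · nlinarith [mul_nonneg (sub_nonneg.mpr hba) hxn]
  have key : ∀ n : ℕ, ∀ a ∈ U, ∀ b ∈ U, a < b →
      (U.filter fun c => a < c ∧ c < b).card ≤ n →
      μ b - μ a ≤ t * (x b - x a) ∧ μ a - μ b ≤ t * (x b - x a) := by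
    intro n
    induction n with
    | zero =>
      intro a ha b hb hab hc
      refine adj a ha b hb hab (fun c hcU h => ?_)
      have hm : c ∈ U.filter fun c => a < c ∧ c < b := Finset.mem_filter.mpr ⟨hcU, h⟩
      have : (U.filter fun c => a < c ∧ c < b) = ∅ :=
        Finset.card_eq_zero.mp (Nat.le_antisymm hc (Nat.zero_le _))
      rw [this] at hm
      exact absurd hm (Finset.notMem_empty c)
    | succ n ih =>
      intro a ha b hb hab hc
      by_cases hne : (U.filter fun c => a < c ∧ c < b).Nonempty
      · obtain ⟨c, hcmem⟩ := hne
        have hcU := (Finset.mem_filter.mp hcmem).1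
        obtain ⟨hac, hcb⟩ := (Finset.mem_filter.mp hcmem).2
        have hsub1 : (U.filter fun d => a < d ∧ d < c) ⊆
            (U.filter fun d => a < d ∧ d < b).erase c := by
          intro d hd
          have hdU := (Finset.mem_filter.mp hd).1
          obtain ⟨h1, h2⟩ := (Finset.mem_filter.mp hd).2
          exact Finset.mem_erase.mpr ⟨ne_of_lt h2, Finset.mem_filter.mpr ⟨hdU, h1, h2.trans hcb⟩⟩
        have hsub2 : (U.filter fun d => c < d ∧ d < b) ⊆
            (U.filter fun d => a < d ∧ d < b).erase c := by
          intro d hd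
          have hdU := (Finset.mem_filter.mp hd).1
          obtain ⟨h1, h2⟩ := (Finset.mem_filter.mp hd).2
          exact Finset.mem_erase.mpr ⟨(ne_of_lt h1).symm, Finset.mem_filter.mpr ⟨hdU, hac.trans h1, h2⟩⟩
        have hce : ((U.filter fun d => a < d ∧ d < b).erase c).card ≤ n := by
          rw [Finset.card_erase_of_mem hcmem]
          omega
        have h1 := ih a ha c hcU hac (le_trans (Finset.card_le_card hsub1) hce)
        have h2 := ih c hcU b hb hcb (le_trans (Finset.card_le_card hsub2) hce)
        constructor
        · nlinarith [h1.1, h2.1]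
        · nlinarith [h1.2, h2.2]
      · refine adj a ha b hb hab (fun c hcU h => ?_)
        exact hne ⟨c, Finset.mem_filter.mpr ⟨hcU, h⟩⟩
  intro b hb b' hb'
  rcases lt_trichotomy b b' with h | h | h
  · have hk := (key _ b hb b' hb' h le_rfl).1
    have hx : x b ≤ x b' := hmono b hb b' hb' h.le
    rw [abs_of_nonneg (sub_nonneg.mpr hx)]
    exact hk
  · subst h; simp [ht]
  · have hk := (key _ b' hb' b hb h le_rfl).2
    have hx : x b' ≤ x b := hmono b' hb' b hb h.le
    rw [abs_of_nonpos (sub_nonpos.mpr hx)]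
    have : -(x b' - x b) = x b - x b' := by ring
    rw [this]
    exact hk
end

section
/- Let x : [0,∞) → ℝ be monotonically nondecreasing with 0 ≤ x(b) ≤ 1 for all b ≥ 0, and let p, μ : [0,∞) → ℝ. Suppose that (i) for all 0 ≤ b < b' the sandwich inequality b·(x(b') − x(b)) ≤ p(b') − p(b) ≤ b'·(x(b') − x(b)) holds, and (ii) for all b, b' ≥ 0 one has μ(b') − μ(b) ≤ (p(b') − p(b)) − b·(x(b') − x(b)). Then μ is constant: μ(b') = μ(b) for all b, b' ≥ 0. -/
/-!
Writing the collusion bound (ii) at `(b, b')` and at `(b', b)` and inserting the payment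
sandwich (i) shows `|μ b' - μ b| ≤ (b' - b) (x b' - x b)`. Cutting `[b, b']` into `n` equal steps and
telescoping, the increments of `x` sum to `x b' - x b`, so `|μ b' - μ b| ≤ (b' - b)/n · (x b' - x b)`,
which tends to `0`.
-/

open Filter Finset

section IncrementBound

variable {f g : ℝ → ℝ} {a b : ℝ}

theorem sub_le_div_mul_of_sub_le_mul_sub (hab : a < b)
    (hfg : ∀ u ∈ Set.Icc a b, ∀ v ∈ Set.Icc a b, u < v → f v - f u ≤ (v - u) * (g v - g u))
    {n : ℕ} (hn : 0 < n) :
    f b - f a ≤ (b - a) / n * (g b - g a) := by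
  set h := (b - a) / n
  have hh : 0 < h := div_pos (sub_pos.2 hab) (by exact_mod_cast hn)
  set t : ℕ → ℝ := fun i => a + i * h
  have ht0 : t 0 = a := by simp [t]
  have htn : t n = b := by
    simp only [t, h]
    field_simp
    ring
  have hstep (i : ℕ) : t (i + 1) - t i = h := by
    simp only [t]
    push_cast
    ring
  have hmem {i : ℕ} (hi : i ≤ n) : t i ∈ Set.Icc a b := by
    refine ⟨le_add_of_nonneg_right (by positivity), ?_⟩
    rw [← htn]
    simp only [t]
    gcongr
  calc f b - f a = ∑ i ∈ range n, (f (t (i + 1)) - f (t i)) := by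
        rw [sum_range_sub (fun i => f (t i)), ht0, htn]
    _ ≤ ∑ i ∈ range n, h * (g (t (i + 1)) - g (t i)) := by
        refine sum_le_sum fun i hi => ?_
        have hi := mem_range.1 hi
        rw [← hstep i]
        exact hfg _ (hmem hi.le) _ (hmem hi) (sub_pos.1 (hstep i ▸ hh))
    _ = h * (g b - g a) := by
        rw [← mul_sum, sum_range_sub (fun i => g (t i)), ht0, htn]

theorem le_of_sub_le_mul_sub (hab : a ≤ b)
    (hfg : ∀ u ∈ Set.Icc a b, ∀ v ∈ Set.Icc a b, u < v → f v - f u ≤ (v - u) * (g v - g u)) :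
    f b ≤ f a := by
  obtain rfl | hab := hab.eq_or_lt
  · rfl
  have hlim : Tendsto (fun n : ℕ => (b - a) / n * (g b - g a)) atTop (nhds 0) := by
    simpa using (tendsto_const_div_atTop_nhds_zero_nat (b - a)).mul_const (g b - g a)
  have hle : f b - f a ≤ 0 := ge_of_tendsto hlim <| eventually_atTop.2
    ⟨1, fun n hn => sub_le_div_mul_of_sub_le_mul_sub hab hfg hn⟩
  linarith

end IncrementBound

section Revenue

variable {x p μ : ℝ → ℝ} {b b' : ℝ}

theorem revenue_increment_le (hpay : p b' - p b ≤ b' * (x b' - x b))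
    (hcol : μ b' - μ b ≤ (p b' - p b) - b * (x b' - x b)) :
    μ b' - μ b ≤ (b' - b) * (x b' - x b) := by
  linarith

theorem revenue_decrement_le (hpay : b * (x b' - x b) ≤ p b' - p b)
    (hcol : μ b - μ b' ≤ (p b - p b') - b' * (x b - x b')) :
    μ b - μ b' ≤ (b' - b) * (x b' - x b) := by
  linarith

end Revenue

theorem revenue_constant_continuous_general
    (x p μ : ℝ → ℝ)
    (hsand : ∀ b b' : ℝ, 0 ≤ b → b < b' →
      b * (x b' - x b) ≤ p b' - p b ∧ p b' - p b ≤ b' * (x b' - x b))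
    (hcol : ∀ b b' : ℝ, 0 ≤ b → 0 ≤ b' →
      μ b' - μ b ≤ (p b' - p b) - b * (x b' - x b)) :
    ∀ b b' : ℝ, 0 ≤ b → 0 ≤ b' → μ b' = μ b := by
  intro b b' hb hb'
  wlog hbb' : b ≤ b' generalizing b b'
  · exact (this b' b hb' hb (le_of_not_ge hbb')).symm
  have hnonneg {u : ℝ} (hu : u ∈ Set.Icc b b') : 0 ≤ u := hb.trans hu.1
  refine le_antisymm (le_of_sub_le_mul_sub (g := x) hbb' ?_) ?_
  · intro u hu v hv huv
    exact revenue_increment_le (hsand u v (hnonneg hu) huv).2 (hcol u v (hnonneg hu) (hnonneg hv))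
  · refine neg_le_neg_iff.1 (le_of_sub_le_mul_sub (f := fun u => -μ u) (g := x) hbb' ?_)
    intro u hu v hv huv
    have := revenue_decrement_le (hsand u v (hnonneg hu) huv).1 (hcol v u (hnonneg hv) (hnonneg hu))
    linarith

/-- revenue-tick lemma on the continuous domain `[0, ∞)`:
the platform revenue `μ` must be constant. -/
theorem revenue_constant_continuous
    (x p μ : ℝ → ℝ)
    (hx01 : ∀ b : ℝ, 0 ≤ b → 0 ≤ x b ∧ x b ≤ 1)
    (hmono : ∀ a b : ℝ, 0 ≤ a → a ≤ b → x a ≤ x b)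
    (hsand : ∀ b b' : ℝ, 0 ≤ b → b < b' →
      b * (x b' - x b) ≤ p b' - p b ∧ p b' - p b ≤ b' * (x b' - x b))
    (hcol : ∀ b b' : ℝ, 0 ≤ b → 0 ≤ b' →
      μ b' - μ b ≤ (p b' - p b) - b * (x b' - x b)) :
    ∀ b b' : ℝ, 0 ≤ b → 0 ≤ b' → μ b' = μ b :=
  revenue_constant_continuous_general x p μ hsand hcol
end

section
/- (Myerson's Lemma, discrete or continuous domain.) Let U ⊆ ℝ be a set of bids, let m be a natural number, and let x, p : U × U^m → ℝ, where x(b, c) and p(b, c) denote buyer i's probability of getting an item and its expected payment when it bids b and the other buyers bid the vector c. Suppose the auction is incentive compatible under input replacement: for every c ∈ U^m and every v, b ∈ U, v·x(v, c) − p(v, c) ≥ v·x(b, c) − p(b, c). Then for every c ∈ U^m and every b, b' ∈ U with b < b': (monotone allocation rule) x(b', c) ≥ x(b, c); and (payment sandwich) b·(x(b', c) − x(b, c)) ≤ p(b', c) − p(b, c) ≤ b'·(x(b', c) − x(b, c)). -/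
/-- Myerson's Lemma (ex post, discrete or continuous domain). -/
theorem myerson_lemma
    (U : Set ℝ) (m : ℕ)
    (x p : ℝ → (Fin m → ℝ) → ℝ)
    (hIC : ∀ c : Fin m → ℝ, (∀ j, c j ∈ U) → ∀ v ∈ U, ∀ b ∈ U,
      v * x v c - p v c ≥ v * x b c - p b c) :
    ∀ c : Fin m → ℝ, (∀ j, c j ∈ U) → ∀ b ∈ U, ∀ b' ∈ U, b < b' →
      x b' c ≥ x b c ∧
      b * (x b' c - x b c) ≤ p b' c - p b c ∧
      p b' c - p b c ≤ b' * (x b' c - x b c) := by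
  intro c hc b hb b' hb' hlt
  have h1 := hIC c hc b hb b' hb'
  have h2 := hIC c hc b' hb' b hb
  refine ⟨by nlinarith, by nlinarith, by nlinarith⟩
end

section
/- (Myerson's Lemma, Bayesian setting.) Let U ⊆ ℝ be a set of bids, let Ω be a finite type (the possible vectors of the other buyers' bids), and let w : Ω → ℝ be nonnegative weights with Σ_{ω ∈ Ω} w(ω) = 1. Let x, p : U × Ω → ℝ. Suppose Bayesian incentive compatibility under input replacement: for all v, b ∈ U, Σ_ω w(ω)·(v·x(v, ω) − p(v, ω)) ≥ Σ_ω w(ω)·(v·x(b, ω) − p(b, ω)). Then for all b, b' ∈ U with b < b': (monotone allocation rule) Σ_ω w(ω)·x(b', ω) ≥ Σ_ω w(ω)·x(b, ω); and (payment sandwich) b·Σ_ω w(ω)·(x(b', ω) − x(b, ω)) ≤ Σ_ω w(ω)·(p(b', ω) − p(b, ω)) ≤ b'·Σ_ω w(ω)·(x(b', ω) − x(b, ω)). -/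
/-- Myerson's Lemma in the Bayesian setting. -/
theorem myerson_lemma_bayesian
    (U : Set ℝ) (Ω : Type*) [Fintype Ω]
    (w : Ω → ℝ) (hw : ∀ ω, 0 ≤ w ω) (hwsum : ∑ ω, w ω = 1)
    (x p : ℝ → Ω → ℝ)
    (hIC : ∀ v ∈ U, ∀ b ∈ U,
      ∑ ω, w ω * (v * x v ω - p v ω) ≥ ∑ ω, w ω * (v * x b ω - p b ω)) :
    ∀ b ∈ U, ∀ b' ∈ U, b < b' →
      (∑ ω, w ω * x b' ω ≥ ∑ ω, w ω * x b ω) ∧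
      b * (∑ ω, w ω * (x b' ω - x b ω)) ≤ ∑ ω, w ω * (p b' ω - p b ω) ∧
      ∑ ω, w ω * (p b' ω - p b ω) ≤ b' * (∑ ω, w ω * (x b' ω - x b ω)) := by
  intro b hb b' hb' hlt
  have key : ∀ v u : ℝ, ∑ ω, w ω * (v * x u ω - p u ω)
      = v * (∑ ω, w ω * x u ω) - ∑ ω, w ω * p u ω := by
    intro v u
    rw [Finset.mul_sum, ← Finset.sum_sub_distrib]
    exact Finset.sum_congr rfl fun ω _ => by ring
  have diff : ∀ u u' : ℝ, ∑ ω, w ω * (x u ω - x u' ω)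
      = (∑ ω, w ω * x u ω) - ∑ ω, w ω * x u' ω := by
    intro u u'
    rw [← Finset.sum_sub_distrib]
    exact Finset.sum_congr rfl fun ω _ => by ring
  have diffp : ∑ ω, w ω * (p b' ω - p b ω)
      = (∑ ω, w ω * p b' ω) - ∑ ω, w ω * p b ω := by
    rw [← Finset.sum_sub_distrib]
    exact Finset.sum_congr rfl fun ω _ => by ring
  have h1 := hIC b hb b' hb'
  have h2 := hIC b' hb' b hb
  rw [key, key] at h1 h2
  refine ⟨?_, ?_, ?_⟩
  · nlinarith [h1, h2]
  · rw [diff, diffp]; linarith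
  · rw [diff, diffp]; linarith
end

section
/- (Functional skeleton of: bIC + 1-pbIC implies almost zero platform revenue, ex post setting.) Let U be a finite set of nonnegative reals with 0 ∈ U, let t ≥ 0 be a tick bound for U, and let n ≥ 1 and k be natural numbers. Let x, p : (Fin n → U) → (Fin n → ℝ) and μ : (Fin n → U) → ℝ. Assume: (a) for every bid vector b and every i, 0 ≤ x(b)(i) ≤ 1 and Σ_i x(b)(i) ≤ k; (b) monotone allocation: for every b, every i, and every u ≤ u' in U, x(b[i ↦ u'])(i) ≥ x(b[i ↦ u])(i); (c) payment sandwich: for every b, every i, and every u < u' in U, u·(x(b[i ↦ u'])(i) − x(b[i ↦ u])(i)) ≤ p(b[i ↦ u'])(i) − p(b[i ↦ u])(i) ≤ u'·(x(b[i ↦ u'])(i) − x(b[i ↦ u])(i)); (d) collusion inequality: for every b, every i, and every u, u' ∈ U, μ(b[i ↦ u']) − μ(b[i ↦ u]) ≤ (p(b[i ↦ u'])(i) − p(b[i ↦ u])(i)) − u·(x(b[i ↦ u'])(i) − x(b[i ↦ u])(i)); and (e) μ of the all-zero bid vector is at most 0. Then for every bid vector b : Fin n → U, μ(b) ≤ t·k·Σ_{m=1}^{n}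 1/m. -/
/-- bIC + 1-pbIC implies almost zero platform revenue
(ex post setting, finite value domain, functional skeleton). -/
theorem platform_revenue_small
    (U : Finset ℝ) (hU0 : (0 : ℝ) ∈ U) (hUnn : ∀ u ∈ U, 0 ≤ u)
    (t : ℝ) (ht : 0 ≤ t)
    (htick : ∀ a ∈ U, ∀ b ∈ U, a < b → (∀ c ∈ U, ¬ (a < c ∧ c < b)) → b - a ≤ t)
    (n k : ℕ) (hn : 1 ≤ n)
    (x p : (Fin n → ℝ) → Fin n → ℝ) (μ : (Fin n → ℝ) → ℝ)
    (ha : ∀ b : Fin n → ℝ, (∀ i, b i ∈ U) →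
      (∀ i, 0 ≤ x b i ∧ x b i ≤ 1) ∧ ∑ i, x b i ≤ (k : ℝ))
    (hb : ∀ b : Fin n → ℝ, (∀ i, b i ∈ U) → ∀ i : Fin n, ∀ u ∈ U, ∀ u' ∈ U,
      u ≤ u' → x (Function.update b i u') i ≥ x (Function.update b i u) i)
    (hc : ∀ b : Fin n → ℝ, (∀ i, b i ∈ U) → ∀ i : Fin n, ∀ u ∈ U, ∀ u' ∈ U,
      u < u' →
      u * (x (Function.update b i u') i - x (Function.update b i u) i) ≤
        p (Function.update b i u') i - p (Function.update b i u) i ∧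
      p (Function.update b i u') i - p (Function.update b i u) i ≤
        u' * (x (Function.update b i u') i - x (Function.update b i u) i))
    (hd : ∀ b : Fin n → ℝ, (∀ i, b i ∈ U) → ∀ i : Fin n, ∀ u ∈ U, ∀ u' ∈ U,
      μ (Function.update b i u') - μ (Function.update b i u) ≤
        (p (Function.update b i u') i - p (Function.update b i u) i) -
          u * (x (Function.update b i u') i - x (Function.update b i u) i))
    (he : μ (fun _ => 0) ≤ 0) :
    ∀ b : Fin n → ℝ, (∀ i, b i ∈ U) →
      μ b ≤ t * k * ∑ m ∈ Finset.Icc 1 n, (1 : ℝ) / m := by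
  -- Step lemma: zeroing out one coordinate costs at most t * x b i.
  have hstep : ∀ b : Fin n → ℝ, (∀ i, b i ∈ U) → ∀ i : Fin n,
      μ b - μ (Function.update b i 0) ≤ t * (x b i - x (Function.update b i 0) i) := by
    intro b hbU i
    have key : ∀ N : ℕ, ∀ v ∈ U, (U.filter (· < v)).card ≤ N →
        μ (Function.update b i v) - μ (Function.update b i 0) ≤
          t * (x (Function.update b i v) i - x (Function.update b i 0) i) := by
      intro N
      induction N with
      | zero =>
        intro v hv hcard
        have hv0 : v = 0 := by
          by_contra h
          have hvpos : 0 < v := lt_of_le_of_ne (hUnn v hv) (Ne.symm h)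
          have hmem : (0:ℝ) ∈ U.filter (· < v) := Finset.mem_filter.2 ⟨hU0, hvpos⟩
          have := Finset.card_pos.2 ⟨0, hmem⟩
          omega
        subst hv0; simp
      | succ N ih =>
        intro v hv hcard
        by_cases hv0 : v = 0
        · subst hv0; simp
        · have hvpos : 0 < v := lt_of_le_of_ne (hUnn v hv) (Ne.symm hv0)
          set T := U.filter (· < v) with hT
          have hTne : T.Nonempty := ⟨0, Finset.mem_filter.2 ⟨hU0, hvpos⟩⟩
          set w := T.max' hTne with hw
          have hwT : w ∈ T := T.max'_mem hTne
          have hwU : w ∈ U := (Finset.mem_filter.1 hwT).1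
          have hwv : w < v := (Finset.mem_filter.1 hwT).2
          have hwt : v - w ≤ t := by
            apply htick w hwU v hv hwv
            intro c hcU hcc
            exact absurd (T.le_max' c (Finset.mem_filter.2 ⟨hcU, hcc.2⟩)) (not_le.2 hcc.1)
          have hxm := hb b hbU i w hwU v hv (le_of_lt hwv)
          have hpc := (hc b hbU i w hwU v hv hwv).2
          have hdd := hd b hbU i w hwU v hv
          have hxd : 0 ≤ x (Function.update b i v) i - x (Function.update b i w) i :=
            sub_nonneg.2 hxm
          have hmul : (v - w) * (x (Function.update b i v) i - x (Function.update b i w) i)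
              ≤ t * (x (Function.update b i v) i - x (Function.update b i w) i) :=
            mul_le_mul_of_nonneg_right hwt hxd
          have hstep1 : μ (Function.update b i v) - μ (Function.update b i w) ≤
              t * (x (Function.update b i v) i - x (Function.update b i w) i) := by
            nlinarith [hmul, hdd, hpc]
          have hcard' : (U.filter (· < w)).card ≤ N := by
            have hsub : U.filter (· < w) ⊆ T := by
              intro c hcmem
              rcases Finset.mem_filter.1 hcmem with ⟨h1, h2⟩
              exact Finset.mem_filter.2 ⟨h1, h2.trans hwv⟩
            have hne : w ∉ U.filter (· < w) := by simp
            have hlt : (U.filter (· < w)).card < T.card :=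
              Finset.card_lt_card ⟨hsub, fun h => hne (h hwT)⟩
            omega
          have hIH := ih w hwU hcard'
          have hwnn : 0 ≤ w := hUnn w hwU
          linarith
    have hfin := key (U.filter (· < b i)).card (b i) (hbU i) le_rfl
    simpa [Function.update_eq_self] using hfin
  -- Main induction on the number of nonzero coordinates.
  have main : ∀ m : ℕ, ∀ b : Fin n → ℝ, (∀ i, b i ∈ U) →
      (Finset.univ.filter (fun i => b i ≠ 0)).card = m →
      μ b ≤ t * k * ∑ j ∈ Finset.Icc 1 m, (1:ℝ) / j := by
    intro m
    induction m with
    | zero =>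
      intro b hbU hcard
      have hall : ∀ i, b i = 0 := by
        intro i
        by_contra h
        have hmem : i ∈ Finset.univ.filter (fun i => b i ≠ 0) :=
          Finset.mem_filter.2 ⟨Finset.mem_univ i, h⟩
        have := Finset.card_pos.2 ⟨i, hmem⟩
        omega
      have hb0 : b = fun _ => 0 := funext hall
      rw [hb0, Finset.Icc_eq_empty (by omega), Finset.sum_empty, mul_zero]
      exact he
    | succ m ih =>
      intro b hbU hcard
      set S := Finset.univ.filter (fun i => b i ≠ 0) with hS
      have hSne : S.Nonempty := Finset.card_pos.1 (by omega)
      obtain ⟨i, hiS, hmin⟩ := S.exists_min_image (x b) hSne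
      have hxk : ((m:ℝ) + 1) * x b i ≤ (k:ℝ) := by
        have h1 : ((m:ℝ) + 1) * x b i = ∑ _j ∈ S, x b i := by
          rw [Finset.sum_const, hcard, nsmul_eq_mul]
          push_cast; ring
        rw [h1]
        calc ∑ _j ∈ S, x b i ≤ ∑ j ∈ S, x b j := Finset.sum_le_sum (fun j hj => hmin j hj)
          _ ≤ ∑ j, x b j := Finset.sum_le_sum_of_subset_of_nonneg
                (Finset.filter_subset _ _) (fun j _ _ => ((ha b hbU).1 j).1)
          _ ≤ (k:ℝ) := (ha b hbU).2
      have hxle : x b i ≤ (k:ℝ) / ((m:ℝ) + 1) := by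
        rw [le_div_iff₀ (by positivity), mul_comm]
        exact hxk
      set b' := Function.update b i 0 with hb'
      have hb'U : ∀ j, b' j ∈ U := by
        intro j
        rcases eq_or_ne j i with h | h
        · subst h; simpa [hb'] using hU0
        · simpa [hb', Function.update_of_ne h] using hbU j
      have hcard' : (Finset.univ.filter (fun j => b' j ≠ 0)).card = m := by
        have heq : Finset.univ.filter (fun j => b' j ≠ 0) = S.erase i := by
          ext j
          rcases eq_or_ne j i with h | h
          · subst h; simp [hb']
          · simp [hb', Function.update_of_ne h, hS, h]
        rw [heq, Finset.card_erase_of_mem hiS, hcard]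
        omega
      have h1 := hstep b hbU i
      have hx0nn : 0 ≤ x b' i := ((ha b' hb'U).1 i).1
      have h2 : μ b ≤ μ b' + t * x b i := by nlinarith [mul_nonneg ht hx0nn]
      have hIH := ih b' hb'U hcard'
      have hsum : ∑ j ∈ Finset.Icc 1 (m+1), (1:ℝ)/j
          = (∑ j ∈ Finset.Icc 1 m, (1:ℝ)/j) + 1/((m:ℝ)+1) := by
        rw [Finset.sum_Icc_succ_top (by omega)]
        push_cast; ring
      rw [hsum]
      have h3 : t * x b i ≤ t * ((k:ℝ) / ((m:ℝ)+1)) := mul_le_mul_of_nonneg_left hxle ht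
      have h4 : t * (k:ℝ) * ((∑ j ∈ Finset.Icc 1 m, (1:ℝ)/j) + 1/((m:ℝ)+1))
          = t * (k:ℝ) * (∑ j ∈ Finset.Icc 1 m, (1:ℝ)/j) + t * ((k:ℝ) / ((m:ℝ)+1)) := by
        ring
      linarith
  intro b hbU
  have hmb := main (Finset.univ.filter (fun i => b i ≠ 0)).card b hbU rfl
  have hmn : (Finset.univ.filter (fun i => b i ≠ 0)).card ≤ n := by
    calc (Finset.univ.filter (fun i => b i ≠ 0)).card ≤ (Finset.univ : Finset (Fin n)).card :=
          Finset.card_filter_le _ _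
      _ = n := by simp
  have hsle : (∑ j ∈ Finset.Icc 1 (Finset.univ.filter (fun i => b i ≠ 0)).card, (1:ℝ)/j)
      ≤ ∑ j ∈ Finset.Icc 1 n, (1:ℝ)/j :=
    Finset.sum_le_sum_of_subset_of_nonneg (Finset.Icc_subset_Icc_right hmn)
      (fun j _ _ => by positivity)
  have htk : 0 ≤ t * (k:ℝ) := mul_nonneg ht (Nat.cast_nonneg k)
  calc μ b ≤ _ := hmb
    _ ≤ t * k * ∑ j ∈ Finset.Icc 1 n, (1:ℝ)/j := mul_le_mul_of_nonneg_left hsle htk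
end

section
/- (Functional skeleton of: bIC + 1-pbIC implies zero platform revenue over a continuous value domain, ex post setting.) Let n ≥ 1 be a natural number. Let x, p : (Fin n → [0,∞)) → (Fin n → ℝ) and μ : (Fin n → [0,∞)) → ℝ. Assume: (a) for every bid vector b and every i, 0 ≤ x(b)(i) ≤ 1; (b) monotone allocation: for every b, every i, and every 0 ≤ u ≤ u', x(b[i ↦ u'])(i) ≥ x(b[i ↦ u])(i); (c) payment sandwich: for every b, every i, and every 0 ≤ u < u', u·(x(b[i ↦ u'])(i) − x(b[i ↦ u])(i)) ≤ p(b[i ↦ u'])(i) − p(b[i ↦ u])(i) ≤ u'·(x(b[i ↦ u'])(i) − x(b[i ↦ u])(i)); (d) collusion inequality: for every b, every i, and every u, u' ≥ 0, μ(b[i ↦ u']) − μ(b[i ↦ u]) ≤ (p(b[i ↦ u'])(i) − p(b[i ↦ u])(i)) − u·(x(b[i ↦ u'])(i) − x(b[i ↦ u])(i)); (e) μ(b) ≥ 0 for every b; and (f) μ of the all-zero bid vector is at most 0. Then μ(b) = 0 for every bid vector b : Fin n → [0,∞). -/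
/-!
Along the line `u ↦ b[i ↦ u]`, the collusion inequality (d) and the upper payment bound (c) give
`μ v - μ u ≤ (v - u) * (x v - x u)`. Telescoping over a uniform grid of mesh `δ` from `0` to `b i`
bounds `μ b - μ b[i ↦ 0]` by `δ * (x b - x b[i ↦ 0])`, which tends to `0` with `δ`. Hence lowering a
bid to `0` never lowers the revenue, and zeroing all bids gives `μ b ≤ μ 0 ≤ 0 ≤ μ b`.
-/

open Filter Topology

theorem antitoneOn_of_sub_le_mul_sub {f g : ℝ → ℝ} {a : ℝ}
    (h : ∀ u v, a ≤ u → u < v → f v - f u ≤ (v - u) * (g v - g u)) :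
    AntitoneOn f (Set.Ici a) := by
  intro u hu v _ huv
  rcases huv.eq_or_lt with rfl | huv
  · rfl
  have grid : ∀ m : ℕ, 0 < m → f v - f u ≤ (v - u) / m * (g v - g u) := by
    intro m hm
    set δ := (v - u) / m with hδ_def
    have hδ : 0 < δ := div_pos (sub_pos.2 huv) (Nat.cast_pos.2 hm)
    have hanti : Antitone fun k : ℕ => f (u + k * δ) - δ * g (u + k * δ) := by
      refine antitone_nat_of_succ_le fun k => ?_
      have hk : a ≤ u + k * δ := le_add_of_le_of_nonneg hu (by positivity)
      have step := h (u + k * δ) (u + (k + 1 : ℕ) * δ) hk (by push_cast; linarith)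
      have hgap : u + (k + 1 : ℕ) * δ - (u + k * δ) = δ := by push_cast; ring
      rw [hgap] at step
      linarith
    have hend : u + m * δ = v := by rw [hδ_def]; field_simp; ring
    have := hanti (Nat.zero_le m)
    simp only [Nat.cast_zero, zero_mul, add_zero, hend] at this
    linarith
  have hlim : Tendsto (fun m : ℕ => (v - u) / m * (g v - g u)) atTop (𝓝 0) := by
    simpa using (tendsto_const_div_atTop_nhds_zero_nat (v - u)).mul_const (g v - g u)
  have := ge_of_tendsto hlim (eventually_atTop.2 ⟨1, fun m hm => grid m hm⟩)
  linarith

theorem le_apply_zero_of_le_update_zero {ι α β : Type*} [Fintype ι] [DecidableEq ι]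
    [Preorder α] [Zero α] [Preorder β] {F : (ι → α) → β}
    (h : ∀ b, 0 ≤ b → ∀ i, F b ≤ F (Function.update b i 0)) {b : ι → α} (hb : 0 ≤ b) :
    F b ≤ F 0 := by
  suffices ∀ s : Finset ι, F b ≤ F (s.piecewise 0 b) by simpa using this Finset.univ
  intro s
  induction s using Finset.induction_on with
  | empty => simp
  | insert i s _ ih =>
    rw [Finset.piecewise_insert]
    refine ih.trans (h _ ?_ i)
    exact Finset.le_piecewise_of_le_of_le _ le_rfl hb

theorem platform_revenue_zero_continuous_general
    (n : ℕ)
    (x p : (Fin n → ℝ) → Fin n → ℝ) (μ : (Fin n → ℝ) → ℝ)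
    (hc : ∀ b : Fin n → ℝ, (∀ i, 0 ≤ b i) → ∀ i : Fin n, ∀ u u' : ℝ,
      0 ≤ u → u < u' →
      u * (x (Function.update b i u') i - x (Function.update b i u) i) ≤
        p (Function.update b i u') i - p (Function.update b i u) i ∧
      p (Function.update b i u') i - p (Function.update b i u) i ≤
        u' * (x (Function.update b i u') i - x (Function.update b i u) i))
    (hd : ∀ b : Fin n → ℝ, (∀ i, 0 ≤ b i) → ∀ i : Fin n, ∀ u u' : ℝ,
      0 ≤ u → 0 ≤ u' →
      μ (Function.update b i u') - μ (Function.update b i u) ≤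
        (p (Function.update b i u') i - p (Function.update b i u) i) -
          u * (x (Function.update b i u') i - x (Function.update b i u) i))
    (he : ∀ b : Fin n → ℝ, (∀ i, 0 ≤ b i) → 0 ≤ μ b)
    (hf : μ (fun _ => 0) ≤ 0) :
    ∀ b : Fin n → ℝ, (∀ i, 0 ≤ b i) → μ b = 0 := by
  have le_update_zero : ∀ b : Fin n → ℝ, 0 ≤ b → ∀ i, μ b ≤ μ (Function.update b i 0) := by
    intro b hb i
    have hanti : AntitoneOn (fun u => μ (Function.update b i u)) (Set.Ici 0) :=
      antitoneOn_of_sub_le_mul_sub (g := fun u => x (Function.update b i u) i)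
        fun u v hu huv => by
          linarith [hd b hb i u v hu (hu.trans huv.le), (hc b hb i u v hu huv).2]
    simpa using hanti (Set.self_mem_Ici : (0 : ℝ) ∈ Set.Ici 0) (hb i) (hb i)
  intro b hb
  exact le_antisymm ((le_apply_zero_of_le_update_zero le_update_zero hb).trans hf) (he b hb)

/-- bIC + 1-pbIC implies zero platform revenue over a
continuous value domain (ex post setting, functional skeleton). -/
theorem platform_revenue_zero_continuous
    (n : ℕ) (hn : 1 ≤ n)
    (x p : (Fin n → ℝ) → Fin n → ℝ) (μ : (Fin n → ℝ) → ℝ)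
    (ha : ∀ b : Fin n → ℝ, (∀ i, 0 ≤ b i) → ∀ i, 0 ≤ x b i ∧ x b i ≤ 1)
    (hb : ∀ b : Fin n → ℝ, (∀ i, 0 ≤ b i) → ∀ i : Fin n, ∀ u u' : ℝ,
      0 ≤ u → u ≤ u' → x (Function.update b i u') i ≥ x (Function.update b i u) i)
    (hc : ∀ b : Fin n → ℝ, (∀ i, 0 ≤ b i) → ∀ i : Fin n, ∀ u u' : ℝ,
      0 ≤ u → u < u' →
      u * (x (Function.update b i u') i - x (Function.update b i u) i) ≤
        p (Function.update b i u') i - p (Function.update b i u) i ∧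
      p (Function.update b i u') i - p (Function.update b i u) i ≤
        u' * (x (Function.update b i u') i - x (Function.update b i u) i))
    (hd : ∀ b : Fin n → ℝ, (∀ i, 0 ≤ b i) → ∀ i : Fin n, ∀ u u' : ℝ,
      0 ≤ u → 0 ≤ u' →
      μ (Function.update b i u') - μ (Function.update b i u) ≤
        (p (Function.update b i u') i - p (Function.update b i u) i) -
          u * (x (Function.update b i u') i - x (Function.update b i u) i))
    (he : ∀ b : Fin n → ℝ, (∀ i, 0 ≤ b i) → 0 ≤ μ b)
    (hf : μ (fun _ => 0) ≤ 0) :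
    ∀ b : Fin n → ℝ, (∀ i, 0 ≤ b i) → μ b = 0 :=
  platform_revenue_zero_continuous_general n x p μ hc hd he hf
end

section
/- (Ideal–real design paradigm.) Let StratR and StratI be types (real-world and ideal-world strategies of a fixed strategic player or coalition) with distinguished honest strategies H_R : StratR and H_I : StratI. Let Inp : ℕ → Type be a family of input spaces indexed by the security parameter, and let uR : StratR → (λ : ℕ) → Inp(λ) → ℝ and uI : StratI → (λ : ℕ) → Inp(λ) → ℝ be the coalition's expected utility functions in the real and ideal auctions. Assume: (1) utility equivalence under honest execution: uR(H_R, λ, ι) = uI(H_I, λ, ι) for all λ and all ι ∈ Inp(λ); (2) utility dominance: for every S : StratR there exist S' : StratI and a negligible function g : ℕ → ℝ such that uR(S, λ, ι) ≤ uI(S', λ, ι) + g(λ) for all λ and ι; (3) the ideal auction is incentive compatible: uI(S', λ, ι) ≤ uI(H_I, λ, ι) for all S' : StratI, all λ, and all ι. Then the real auction is computationally incentive compatible: for every S : StratR there exists a negligible function g' : ℕ → ℝ such that uR(S, λ, ι) ≤ uR(H_R, λ, ι) + g'(λ) for all λ and ι. -/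
/-- A function `g : ℕ → ℝ` is negligible if `g λ · λ^c → 0` for every `c`. -/
def Negligible (g : ℕ → ℝ) : Prop :=
  ∀ c : ℕ, Filter.Tendsto (fun l : ℕ => g l * (l : ℝ) ^ c) Filter.atTop (nhds 0)

/-- the ideal–real design paradigm. Utility-dominated emulation of an
information-theoretically incentive-compatible ideal auction yields computational
incentive compatibility of the real auction. -/
theorem ideal_real_design_paradigm
    {StratR StratI : Type*} (HR : StratR) (HI : StratI)
    (Inp : ℕ → Type*)
    (uR : StratR → (l : ℕ) → Inp l → ℝ)
    (uI : StratI → (l : ℕ) → Inp l → ℝ)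
    (h1 : ∀ (l : ℕ) (ι : Inp l), uR HR l ι = uI HI l ι)
    (h2 : ∀ S : StratR, ∃ S' : StratI, ∃ g : ℕ → ℝ, Negligible g ∧
      ∀ (l : ℕ) (ι : Inp l), uR S l ι ≤ uI S' l ι + g l)
    (h3 : ∀ (S' : StratI) (l : ℕ) (ι : Inp l), uI S' l ι ≤ uI HI l ι) :
    ∀ S : StratR, ∃ g' : ℕ → ℝ, Negligible g' ∧
      ∀ (l : ℕ) (ι : Inp l), uR S l ι ≤ uR HR l ι + g' l := by
  intro S
  obtain ⟨S', g, hg, hle⟩ := h2 S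
  exact ⟨g, hg, fun l ι => (hle l ι).trans (by rw [h1]; linarith [h3 S' l ι])⟩
end

section
/- (Incentive compatibility of the discrete Myerson payment rule.) Let T be a natural number, let θ : Fin(T+1) → ℝ be strictly increasing (θ_0 < θ_1 < ... < θ_T), and let x : Fin(T+1) → ℝ be monotonically nondecreasing. Define the payment rule p(τ) = θ_τ·x(τ) − Σ_{j=1}^{τ} (θ_j − θ_{j−1})·x(j−1). Then for every t, τ ∈ Fin(T+1): θ_t·x(t) − p(t) ≥ θ_t·x(τ) − p(τ); that is, a buyer with true value θ_t maximizes its utility by bidding θ_t rather than any other value θ_τ in the domain. -/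
/-!
Under the Myerson payment the truthful utility of type `θ_τ` is the Riemann sum
`U τ = ∑_{j < τ} (θ_{j+1} - θ_j) x_j`, and the gain from reporting truthfully as `θ_t` instead of
`θ_τ` is `U t - U τ - (θ_t - θ_τ) x_τ`. Since `θ` increases and `x` is monotone, the Riemann sum
over `[τ, t)` (or `[t, τ)`) is bounded below (resp. above) by the rectangle of height `x_τ`,
so this gain is nonnegative.
-/

open Finset

namespace Myerson

variable {θ x : ℕ → ℝ} {a b n : ℕ}

/-- The buyer's utility from bidding truthfully under the discrete Myerson payment rule. -/
def envelopeUtility (θ x : ℕ → ℝ) (τ : ℕ) : ℝ :=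
  ∑ j ∈ range τ, (θ (j + 1) - θ j) * x j

theorem envelopeUtility_sub_envelopeUtility (hab : a ≤ b) :
    envelopeUtility θ x b - envelopeUtility θ x a = ∑ j ∈ Ico a b, (θ (j + 1) - θ j) * x j :=
  (sum_Ico_eq_sub _ hab).symm

theorem sum_Ico_sub_mul_const (hab : a ≤ b) (c : ℝ) :
    ∑ j ∈ Ico a b, (θ (j + 1) - θ j) * c = (θ b - θ a) * c := by
  rw [← sum_mul, sum_Ico_sub θ hab]

theorem increment_nonneg_of_mem_Ico (hθ : MonotoneOn θ (Set.Icc a b)) {j : ℕ} (hj : j ∈ Ico a b) :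
    0 ≤ θ (j + 1) - θ j := by
  obtain ⟨haj, hjb⟩ := mem_Ico.1 hj
  exact sub_nonneg.2 <| hθ ⟨haj, hjb.le⟩ ⟨by omega, hjb⟩ j.le_succ

theorem mul_sub_le_envelopeUtility_sub (hab : a ≤ b) (hθ : MonotoneOn θ (Set.Icc a b))
    (hx : MonotoneOn x (Set.Icc a b)) :
    (θ b - θ a) * x a ≤ envelopeUtility θ x b - envelopeUtility θ x a := by
  rw [envelopeUtility_sub_envelopeUtility hab, ← sum_Ico_sub_mul_const hab]
  refine sum_le_sum fun j hj => mul_le_mul_of_nonneg_left ?_ (increment_nonneg_of_mem_Ico hθ hj)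
  obtain ⟨haj, hjb⟩ := mem_Ico.1 hj
  exact hx ⟨le_rfl, hab⟩ ⟨haj, hjb.le⟩ haj

theorem envelopeUtility_sub_le_mul_sub (hab : a ≤ b) (hθ : MonotoneOn θ (Set.Icc a b))
    (hx : MonotoneOn x (Set.Icc a b)) :
    envelopeUtility θ x b - envelopeUtility θ x a ≤ (θ b - θ a) * x b := by
  rw [envelopeUtility_sub_envelopeUtility hab, ← sum_Ico_sub_mul_const hab]
  refine sum_le_sum fun j hj => mul_le_mul_of_nonneg_left ?_ (increment_nonneg_of_mem_Ico hθ hj)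
  obtain ⟨haj, hjb⟩ := mem_Ico.1 hj
  exact hx ⟨haj, hjb.le⟩ ⟨hab, le_rfl⟩ hjb.le

theorem mul_sub_le_envelopeUtility_sub_of_le (hθ : MonotoneOn θ (Set.Iic n))
    (hx : MonotoneOn x (Set.Iic n)) {t τ : ℕ} (ht : t ≤ n) (hτ : τ ≤ n) :
    (θ t - θ τ) * x τ ≤ envelopeUtility θ x t - envelopeUtility θ x τ := by
  rcases le_total τ t with hτt | htτ
  · have hsub : Set.Icc τ t ⊆ Set.Iic n := fun j hj => hj.2.trans ht
    exact mul_sub_le_envelopeUtility_sub hτt (hθ.mono hsub) (hx.mono hsub)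
  · have hsub : Set.Icc t τ ⊆ Set.Iic n := fun j hj => hj.2.trans hτ
    have := envelopeUtility_sub_le_mul_sub htτ (hθ.mono hsub) (hx.mono hsub)
    linarith

end Myerson

open Fin.NatCast in
theorem Monotone.monotoneOn_comp_natCast {α : Type*} [Preorder α] {n : ℕ} {f : Fin (n + 1) → α}
    (hf : Monotone f) : MonotoneOn (fun j : ℕ => f j) (Set.Iic n) :=
  fun _ _ _ hb hab => hf (Fin.natCast_mono hb hab)

open Fin.NatCast in
/-- incentive compatibility of the discrete Myerson payment rule. -/
theorem discrete_myerson_payment_IC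
    (T : ℕ) (θ : Fin (T + 1) → ℝ) (hθ : StrictMono θ)
    (x : Fin (T + 1) → ℝ) (hx : Monotone x)
    (p : Fin (T + 1) → ℝ)
    (hp : ∀ τ : Fin (T + 1),
      p τ = θ τ * x τ -
        ∑ j ∈ Finset.range (τ : ℕ),
          (θ ((j + 1 : ℕ) : Fin (T + 1)) - θ ((j : ℕ) : Fin (T + 1))) *
            x ((j : ℕ) : Fin (T + 1))) :
    ∀ t τ : Fin (T + 1), θ t * x t - p t ≥ θ t * x τ - p τ := by
  intro t τ
  have hp' : ∀ σ : Fin (T + 1),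
      p σ = θ σ * x σ - Myerson.envelopeUtility (fun j : ℕ => θ j) (fun j : ℕ => x j) σ := hp
  have key := Myerson.mul_sub_le_envelopeUtility_sub_of_le hθ.monotone.monotoneOn_comp_natCast
    hx.monotoneOn_comp_natCast t.is_le τ.is_le
  simp only [Fin.cast_val_eq_self] at key
  rw [hp' t, hp' τ]
  linarith
end

section
/- (Expected payment equals expected virtual surplus for the discrete Myerson payment rule.) Let T be a natural number, let θ : Fin(T+1) → ℝ be strictly increasing, and let f : Fin(T+1) → ℝ satisfy f(τ) > 0 for every τ and Σ_τ f(τ) = 1. Let F(τ) = Σ_{j ≤ τ} f(j), and define the virtual value φ(τ) = θ_τ − ((1 − F(τ))/f(τ))·(θ_{τ+1} − θ_τ) for τ < T and φ(T) = θ_T. Let x : Fin(T+1) → ℝ be arbitrary, and define p(τ) = θ_τ·x(τ) − Σ_{j=1}^{τ} (θ_j − θ_{j−1})·x(j−1). Then Σ_τ f(τ)·p(τ) = Σ_τ f(τ)·x(τ)·φ(τ). -/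
/-!
Exchanging the order of summation in `∑ τ, f τ * ∑ j < τ, (θ (j+1) - θ j) * x j` replaces the
weight `f τ` by the tail mass `∑ i > j, f i = 1 - F j`, which is exactly the information rent
subtracted in `f j * x j * φ j`; at the top type the tail is empty, matching `φ T = θ T`.
-/

open Finset

theorem Finset.sum_Iic_add_sum_Ioi {ι M : Type*} [LinearOrder ι] [Fintype ι]
    [LocallyFiniteOrderBot ι] [LocallyFiniteOrderTop ι] [AddCommMonoid M] (f : ι → M) (a : ι) :
    ∑ i ∈ Iic a, f i + ∑ i ∈ Ioi a, f i = ∑ i, f i := by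
  rw [← sum_union (disjoint_left.2 fun i hi hi' => (mem_Iic.1 hi).not_gt (mem_Ioi.1 hi'))]
  exact sum_congr (eq_univ_of_forall fun i => by simp [le_or_gt]) fun _ _ => rfl

theorem Finset.sum_mul_sum_Iio {ι R : Type*} [Preorder ι] [Fintype ι]
    [LocallyFiniteOrderBot ι] [LocallyFiniteOrderTop ι] [NonUnitalNonAssocSemiring R]
    (a b : ι → R) :
    ∑ i, a i * ∑ j ∈ Iio i, b j = ∑ j, (∑ i ∈ Ioi j, a i) * b j := by
  simp only [mul_sum, sum_mul]
  exact sum_comm' fun i j => by simp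

theorem Fin.sum_Iio_val {n : ℕ} {M : Type*} [AddCommMonoid M] (g : ℕ → M) (τ : Fin n) :
    ∑ j ∈ Iio τ, g j = ∑ j ∈ range τ, g j := by
  rw [← Nat.Iio_eq_range, ← Fin.map_valEmbedding_Iio, sum_map, Fin.valEmbedding_apply]

open Fin.NatCast in
theorem discrete_myerson_virtual_surplus_general
    (T : ℕ) (θ : Fin (T + 1) → ℝ)
    (f : Fin (T + 1) → ℝ) (hf : ∀ τ, 0 < f τ) (hfsum : ∑ τ, f τ = 1)
    (F : Fin (T + 1) → ℝ) (hF : ∀ τ, F τ = ∑ j ∈ Finset.Iic τ, f j)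
    (φ : Fin (T + 1) → ℝ)
    (hφ : ∀ τ : Fin (T + 1), (τ : ℕ) < T →
      φ τ = θ τ - ((1 - F τ) / f τ) *
        (θ (((τ : ℕ) + 1 : ℕ) : Fin (T + 1)) - θ τ))
    (hφT : φ (Fin.last T) = θ (Fin.last T))
    (x p : Fin (T + 1) → ℝ)
    (hp : ∀ τ : Fin (T + 1),
      p τ = θ τ * x τ -
        ∑ j ∈ Finset.range (τ : ℕ),
          (θ ((j + 1 : ℕ) : Fin (T + 1)) - θ ((j : ℕ) : Fin (T + 1))) *
            x ((j : ℕ) : Fin (T + 1))) :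
    ∑ τ, f τ * p τ = ∑ τ, f τ * x τ * φ τ := by
  set g : ℕ → ℝ := fun j =>
    (θ ((j + 1 : ℕ) : Fin (T + 1)) - θ ((j : ℕ) : Fin (T + 1))) * x ((j : ℕ) : Fin (T + 1))
  have hpayment (τ) : p τ = θ τ * x τ - ∑ j ∈ Iio τ, g j := by rw [hp, Fin.sum_Iio_val]
  have htail (τ) : 1 - F τ = ∑ i ∈ Ioi τ, f i := by
    rw [hF, ← hfsum, ← sum_Iic_add_sum_Ioi f τ, add_sub_cancel_left]
  have hsurplus (τ) : f τ * x τ * φ τ = f τ * (θ τ * x τ) - (1 - F τ) * g τ := by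
    rcases (Fin.le_last τ).lt_or_eq with hτ | rfl
    · rw [hφ τ hτ]
      simp only [g, Fin.cast_val_eq_self]
      field_simp [(hf τ).ne']
    · rw [htail, Ioi_eq_empty.2 fun _ _ => Fin.le_last _, sum_empty, hφT]
      ring
  calc ∑ τ, f τ * p τ
      = ∑ τ, f τ * (θ τ * x τ) - ∑ τ, f τ * ∑ j ∈ Iio τ, g j := by
        simp only [hpayment, mul_sub, sum_sub_distrib]
    _ = ∑ τ, f τ * (θ τ * x τ) - ∑ τ, (∑ i ∈ Ioi τ, f i) * g τ := by
        rw [sum_mul_sum_Iio]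
    _ = ∑ τ, f τ * x τ * φ τ := by
        simp only [hsurplus, htail, sum_sub_distrib]

open Fin.NatCast in
/-- expected payment equals expected virtual surplus for the
discrete Myerson payment rule. -/
theorem discrete_myerson_virtual_surplus
    (T : ℕ) (θ : Fin (T + 1) → ℝ) (hθ : StrictMono θ)
    (f : Fin (T + 1) → ℝ) (hf : ∀ τ, 0 < f τ) (hfsum : ∑ τ, f τ = 1)
    (F : Fin (T + 1) → ℝ) (hF : ∀ τ, F τ = ∑ j ∈ Finset.Iic τ, f j)
    (φ : Fin (T + 1) → ℝ)
    (hφ : ∀ τ : Fin (T + 1), (τ : ℕ) < T →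
      φ τ = θ τ - ((1 - F τ) / f τ) *
        (θ (((τ : ℕ) + 1 : ℕ) : Fin (T + 1)) - θ τ))
    (hφT : φ (Fin.last T) = θ (Fin.last T))
    (x p : Fin (T + 1) → ℝ)
    (hp : ∀ τ : Fin (T + 1),
      p τ = θ τ * x τ -
        ∑ j ∈ Finset.range (τ : ℕ),
          (θ ((j + 1 : ℕ) : Fin (T + 1)) - θ ((j : ℕ) : Fin (T + 1))) *
            x ((j : ℕ) : Fin (T + 1))) :
    ∑ τ, f τ * p τ = ∑ τ, f τ * x τ * φ τ :=
  discrete_myerson_virtual_surplus_general T θ f hf hfsum F hF φ hφ hφT x p hp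
end

section
/- (Greedy allocation maximizes virtual surplus.) Let n, k be natural numbers, let φ : Fin n → ℝ, and let x : Fin n → ℝ satisfy 0 ≤ x(i) ≤ 1 for every i and Σ_i x(i) ≤ k. Then there exists a finite set S ⊆ Fin n with |S| ≤ k such that φ(i) ≥ 0 for every i ∈ S and Σ_i x(i)·φ(i) ≤ Σ_{i ∈ S} φ(i). -/
/-- greedy allocation to the (at most) `k` buyers with the largest
nonnegative virtual values maximizes virtual surplus. -/
theorem greedy_maximizes_virtual_surplus
    (n k : ℕ) (φ : Fin n → ℝ) (x : Fin n → ℝ)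
    (hx01 : ∀ i, 0 ≤ x i ∧ x i ≤ 1) (hxk : ∑ i, x i ≤ (k : ℝ)) :
    ∃ S : Finset (Fin n), S.card ≤ k ∧ (∀ i ∈ S, 0 ≤ φ i) ∧
      ∑ i, x i * φ i ≤ ∑ i ∈ S, φ i := by
  classical
  have hx0 : ∀ i, 0 ≤ x i := fun i => (hx01 i).1
  have hx1 : ∀ i, x i ≤ 1 := fun i => (hx01 i).2
  set P : Finset (Fin n) := Finset.univ.filter (fun i => 0 ≤ φ i) with hPdef
  have hφP : ∀ i ∈ P, 0 ≤ φ i := by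
    intro i hi
    simpa [hPdef] using hi
  have hsumP : ∑ i ∈ P, x i ≤ (k : ℝ) :=
    le_trans (Finset.sum_le_sum_of_subset_of_nonneg (Finset.subset_univ P)
      (fun i _ _ => hx0 i)) hxk
  have hreduce : ∑ i, x i * φ i ≤ ∑ i ∈ P, x i * φ i := by
    have := Finset.sum_filter_add_sum_filter_not Finset.univ (fun i => 0 ≤ φ i)
      (fun i => x i * φ i)
    have hneg : ∑ i ∈ Finset.univ.filter (fun i => ¬ 0 ≤ φ i), x i * φ i ≤ 0 := by
      apply Finset.sum_nonpos
      intro i hi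
      have : φ i < 0 := lt_of_not_ge (by simpa using (Finset.mem_filter.mp hi).2)
      exact mul_nonpos_of_nonneg_of_nonpos (hx0 i) this.le
    rw [hPdef]
    linarith [this]
  rcases Nat.eq_zero_or_pos k with hk0 | hkpos
  · refine ⟨∅, by simp, by simp, ?_⟩
    subst hk0
    have hzero : ∀ i, x i = 0 := by
      intro i
      have hsum0 : ∑ i, x i = 0 :=
        le_antisymm (by simpa using hxk) (Finset.sum_nonneg fun i _ => hx0 i)
      have := (Finset.sum_eq_zero_iff_of_nonneg (fun i _ => hx0 i)).mp hsum0
      exact this i (Finset.mem_univ i)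
    simp [hzero]
  rcases le_or_gt P.card k with hcard | hcard
  · -- take S = P
    refine ⟨P, hcard, hφP, ?_⟩
    refine le_trans hreduce (Finset.sum_le_sum fun i hi => ?_)
    exact mul_le_of_le_one_left (hφP i hi) (hx1 i)
  · -- choose S ⊆ P with card k maximizing the sum of φ
    obtain ⟨S₀, hS₀P, hS₀card⟩ := Finset.exists_subset_card_eq hcard.le
    set 𝒮 : Finset (Finset (Fin n)) := P.powerset.filter (fun S => S.card = k) with h𝒮
    have h𝒮ne : 𝒮.Nonempty := ⟨S₀, by simp [h𝒮, Finset.mem_powerset, hS₀P, hS₀card]⟩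
    obtain ⟨S, hS𝒮, hSmax⟩ := Finset.exists_max_image 𝒮 (fun S => ∑ i ∈ S, φ i) h𝒮ne
    have hSP : S ⊆ P := Finset.mem_powerset.mp (Finset.mem_filter.mp hS𝒮).1
    have hScard : S.card = k := (Finset.mem_filter.mp hS𝒮).2
    have hSne : S.Nonempty := Finset.card_pos.mp (hScard ▸ hkpos)
    obtain ⟨i₀, hi₀S, hi₀min⟩ := Finset.exists_min_image S φ hSne
    set t := φ i₀ with ht
    have ht0 : 0 ≤ t := hφP i₀ (hSP hi₀S)
    -- swap claim
    have hswap : ∀ j ∈ P \ S, φ j ≤ t := by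
      intro j hj
      obtain ⟨hjP, hjS⟩ := Finset.mem_sdiff.mp hj
      have hjne : j ∉ S.erase i₀ := fun h => hjS (Finset.mem_of_mem_erase h)
      set S' := insert j (S.erase i₀) with hS'
      have hS'P : S' ⊆ P := by
        intro a ha
        rcases Finset.mem_insert.mp ha with rfl | ha
        · exact hjP
        · exact hSP (Finset.mem_of_mem_erase ha)
      have hS'card : S'.card = k := by
        rw [hS', Finset.card_insert_of_notMem hjne,
          Finset.card_erase_of_mem hi₀S, hScard]
        omega
      have hS'𝒮 : S' ∈ 𝒮 := by
        simp [h𝒮, Finset.mem_powerset, hS'P, hS'card]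
      have hle := hSmax S' hS'𝒮
      have hsum' : ∑ i ∈ S', φ i = φ j + (∑ i ∈ S, φ i - φ i₀) := by
        rw [hS', Finset.sum_insert hjne, Finset.sum_erase_eq_sub hi₀S]
      simp only [hsum'] at hle
      linarith
    refine ⟨S, hScard.le, fun i hi => hφP i (hSP hi), ?_⟩
    refine le_trans hreduce ?_
    have hsplit : ∑ i ∈ P \ S, x i * φ i + ∑ i ∈ S, x i * φ i = ∑ i ∈ P, x i * φ i :=
      Finset.sum_sdiff hSP
    have hsdiffx : ∑ i ∈ P \ S, x i + ∑ i ∈ S, x i = ∑ i ∈ P, x i :=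
      Finset.sum_sdiff hSP
    have h1 : ∑ i ∈ P \ S, x i * φ i ≤ t * ∑ i ∈ P \ S, x i := by
      rw [Finset.mul_sum]
      refine Finset.sum_le_sum fun j hj => ?_
      have := mul_le_mul_of_nonneg_left (hswap j hj) (hx0 j)
      linarith [this]
    have h2 : t * ∑ i ∈ P \ S, x i ≤ t * ((k : ℝ) - ∑ i ∈ S, x i) := by
      apply mul_le_mul_of_nonneg_left _ ht0
      linarith
    have h3 : t * ((k : ℝ) - ∑ i ∈ S, x i) = ∑ i ∈ S, (t - t * x i) := by
      rw [Finset.sum_sub_distrib, ← Finset.mul_sum, Finset.sum_const, hScard]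
      ring_nf
    have h4 : ∑ i ∈ S, x i * φ i + ∑ i ∈ S, (t - t * x i) ≤ ∑ i ∈ S, φ i := by
      rw [← Finset.sum_add_distrib]
      refine Finset.sum_le_sum fun i hi => ?_
      have h5 : t ≤ φ i := hi₀min i hi
      have h6 : x i ≤ 1 := hx1 i
      have h7 : 0 ≤ x i := hx0 i
      nlinarith [mul_nonneg (sub_nonneg.mpr h5) (sub_nonneg.mpr h6)]
    linarith
end

section
/- (Two-sided deviation from the mean for bounded random variables.) Let (Ω, P) be a probability space and let X : Ω → ℝ be a measurable random variable with 0 ≤ X ≤ 1 almost surely. Let 0 < ε ≤ 1 and suppose P(|X − E[X]| ≥ ε) ≥ ε. Then P(X − E[X] ≥ ε²/4) ≥ ε²/4 and P(E[X] − X ≥ ε²/4) ≥ ε²/4. -/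
/-!
Write `f = X - 𝔼[X]`, so that `∫ f = 0` and `-1 ≤ f ≤ 1`. Markov's inequality for `|f|` turns the
hypothesis into `ε² ≤ ∫ |f| = 2 ∫ f⁺`. On the other hand `f⁺ ≤ c + 𝟙{c ≤ f}` because `f ≤ 1`, so
`∫ f⁺ ≤ c + P(c ≤ f)`; with `c = ε²/4` this gives `P(ε²/4 ≤ f) ≥ ε²/4`. The same argument
applied to `-f` gives the other tail.
-/

open MeasureTheory

namespace MeasureTheory

variable {Ω : Type*} [MeasurableSpace Ω] {P : Measure Ω} {f : Ω → ℝ}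

lemma integral_abs_eq_two_mul_integral_posPart (hf : Integrable f P) (hf0 : ∫ ω, f ω ∂P = 0) :
    ∫ ω, |f ω| ∂P = 2 * ∫ ω, (f ω)⁺ ∂P := by
  have habs : ∀ a : ℝ, |a| = 2 * a⁺ - a := fun a => by
    linarith [posPart_add_negPart a, posPart_sub_negPart a]
  have hpos : Integrable (fun ω => (f ω)⁺) P := hf.pos_part
  simp_rw [habs]
  rw [integral_sub (hpos.const_mul 2) hf, integral_const_mul, hf0, sub_zero]

lemma integral_posPart_le_add_measureReal [IsProbabilityMeasure P] (hf : Measurable f)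
    (hfi : Integrable f P) (hf1 : ∀ᵐ ω ∂P, f ω ≤ 1) {c : ℝ} (hc : 0 ≤ c) :
    ∫ ω, (f ω)⁺ ∂P ≤ c + P.real {ω | c ≤ f ω} := by
  set S := {ω | c ≤ f ω}
  have hS : MeasurableSet S := measurableSet_le measurable_const hf
  have hind : Integrable (S.indicator (1 : Ω → ℝ)) P := (integrable_const 1).indicator hS
  have hpt : ∀ᵐ ω ∂P, (f ω)⁺ ≤ c + S.indicator 1 ω := by
    filter_upwards [hf1] with ω hω
    by_cases hωS : ω ∈ S
    · simp only [Set.indicator_of_mem hωS, Pi.one_apply, posPart_def, max_le_iff]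
      constructor <;> linarith
    · have : f ω < c := lt_of_not_ge hωS
      simp only [Set.indicator_of_notMem hωS, add_zero, posPart_def, max_le_iff]
      constructor <;> linarith
  calc ∫ ω, (f ω)⁺ ∂P ≤ ∫ ω, (c + S.indicator 1 ω) ∂P :=
        integral_mono_ae hfi.pos_part ((integrable_const c).add hind) hpt
    _ = c + P.real S := by
        rw [integral_add (integrable_const c) hind, integral_indicator_one hS, integral_const,
          probReal_univ, one_smul]

lemma sq_div_four_le_measureReal_ge [IsProbabilityMeasure P] (hf : Measurable f)
    (hfi : Integrable f P) (hf0 : ∫ ω, f ω ∂P = 0) (hf1 : ∀ᵐ ω ∂P, f ω ≤ 1) {ε : ℝ}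
    (hε : 0 < ε) (hdev : ε ≤ P.real {ω | ε ≤ |f ω|}) :
    ε ^ 2 / 4 ≤ P.real {ω | ε ^ 2 / 4 ≤ f ω} := by
  have hsq : ε ^ 2 ≤ 2 * ∫ ω, (f ω)⁺ ∂P :=
    calc ε ^ 2 = ε * ε := sq ε
      _ ≤ ε * P.real {ω | ε ≤ |f ω|} := mul_le_mul_of_nonneg_left hdev hε.le
      _ ≤ ∫ ω, |f ω| ∂P :=
        mul_meas_ge_le_integral_of_nonneg (.of_forall fun ω => abs_nonneg (f ω)) hfi.abs ε
      _ = 2 * ∫ ω, (f ω)⁺ ∂P := integral_abs_eq_two_mul_integral_posPart hfi hf0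
  linarith [integral_posPart_le_add_measureReal hf hfi hf1 (by positivity : 0 ≤ ε ^ 2 / 4)]

end MeasureTheory

theorem two_sided_deviation_general
    {Ω : Type*} [MeasurableSpace Ω] (P : Measure Ω) [IsProbabilityMeasure P]
    (X : Ω → ℝ) (hX : Measurable X)
    (hbdd : ∀ᵐ ω ∂P, 0 ≤ X ω ∧ X ω ≤ 1)
    (ε : ℝ) (hε0 : 0 < ε)
    (hdev : ENNReal.ofReal ε ≤ P {ω | ε ≤ |X ω - ∫ ω', X ω' ∂P|}) :
    ENNReal.ofReal (ε ^ 2 / 4) ≤ P {ω | ε ^ 2 / 4 ≤ X ω - ∫ ω', X ω' ∂P} ∧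
    ENNReal.ofReal (ε ^ 2 / 4) ≤ P {ω | ε ^ 2 / 4 ≤ (∫ ω', X ω' ∂P) - X ω} := by
  have hXi : Integrable X P := .of_bound hX.aestronglyMeasurable 1 <| by
    filter_upwards [hbdd] with ω hω
    exact (Real.norm_of_nonneg hω.1).trans_le hω.2
  set m := ∫ ω, X ω ∂P
  have hm0 : 0 ≤ m := integral_nonneg_of_ae (hbdd.mono fun ω hω => hω.1)
  have hm1 : m ≤ 1 := by
    simpa using integral_mono_ae hXi (integrable_const 1) (hbdd.mono fun ω hω => hω.2)
  have hmean : ∫ ω, (X ω - m) ∂P = 0 := by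
    simp [integral_sub hXi (integrable_const m), m]
  have hdev' : ε ≤ P.real {ω | ε ≤ |X ω - m|} := by
    rwa [ENNReal.ofReal_le_iff_le_toReal (measure_ne_top _ _)] at hdev
  rw [ENNReal.ofReal_le_iff_le_toReal (measure_ne_top _ _),
    ENNReal.ofReal_le_iff_le_toReal (measure_ne_top _ _)]
  constructor
  · refine sq_div_four_le_measureReal_ge (hX.sub_const m) (hXi.sub (integrable_const m)) hmean
      (hbdd.mono fun ω hω => ?_) hε0 hdev'
    linarith [hω.2]
  · refine sq_div_four_le_measureReal_ge (f := fun ω => m - X ω) (measurable_const.sub hX)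
      ((integrable_const m).sub hXi) ?_ (hbdd.mono fun ω hω => ?_) hε0 ?_
    · simp [integral_sub (integrable_const m) hXi, m]
    · linarith [hω.1]
    · simpa only [abs_sub_comm] using hdev'

/-- two-sided deviation from the mean for [0,1]-valued random
variables. -/
theorem two_sided_deviation
    {Ω : Type*} [MeasurableSpace Ω] (P : Measure Ω) [IsProbabilityMeasure P]
    (X : Ω → ℝ) (hX : Measurable X)
    (hbdd : ∀ᵐ ω ∂P, 0 ≤ X ω ∧ X ω ≤ 1)
    (ε : ℝ) (hε0 : 0 < ε) (hε1 : ε ≤ 1)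
    (hdev : ENNReal.ofReal ε ≤ P {ω | ε ≤ |X ω - ∫ ω', X ω' ∂P|}) :
    ENNReal.ofReal (ε ^ 2 / 4) ≤ P {ω | ε ^ 2 / 4 ≤ X ω - ∫ ω', X ω' ∂P} ∧
    ENNReal.ofReal (ε ^ 2 / 4) ≤ P {ω | ε ^ 2 / 4 ≤ (∫ ω', X ω' ∂P) - X ω} :=
  two_sided_deviation_general P X hX hbdd ε hε0 hdev
end
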